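/- Let u₁, …, u_m be independent, identically distributed real random variables with mean zero whose values lie almost surely in an interval of length L > 0, and let S_k = Σ_{i=1}^{k} u_i for k ∈ {1,…,m}. If λ > 0 satisfies exp(−2λ²/(m·L²)) ≤ 1/4, then P( max_{k ∈ {1,…,m}} |S_k| > 2λ ) ≤ 4·exp(−2λ²/(m·L²)). -/

import Mathlib

/-!
Hoeffding's lemma makes the sum of any `j ≤ m` of the centred variables sub-Gaussian with
variance proxy `j L² / 4`, so each tail sum `S_m - S_k` exceeds `λ` with probability at most
`2 exp(-2λ²/(m L²)) ≤ 1/2`. Ottaviani's first-passage argument turns this into a maximal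
inequality: split `{max_k |S_k| > 2λ}` according to the first `k` with `|S_k| > 2λ`. That event
depends only on `u_1, …, u_k`, hence is independent of `S_m - S_k`, and on its intersection
with `{|S_m - S_k| ≤ λ}` we have `|S_m| > λ`. Therefore
`P(max_k |S_k| > 2λ) ≤ 2 P(|S_m| > λ) ≤ 4 exp(-2λ²/(m L²))`.
-/

open MeasureTheory ProbabilityTheory Real Finset
open scoped ENNReal NNReal

lemma lt_abs_add_of_add_lt_abs {r t x y : ℝ} (hx : r + t < |x|) (hy : |y| ≤ t) :
    r < |x + y| := by
  have := abs_sub (x + y) y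
  rw [add_sub_cancel_right] at this
  linarith

lemma Finset.map_subtype_Iic_eq_Icc {m : ℕ} (k : {k : ℕ // 1 ≤ k ∧ k ≤ m}) :
    (Iic k).map (Function.Embedding.subtype _) = Icc 1 k.1 := by
  ext i
  simp only [mem_map, mem_Iic, Function.Embedding.subtype_apply, mem_Icc]
  constructor
  · rintro ⟨j, hj, rfl⟩
    exact ⟨j.2.1, hj⟩
  · rintro ⟨h1, hk⟩
    exact ⟨⟨i, h1, hk.trans k.2.2⟩, hk, rfl⟩

lemma measurableSet_disjointed_of_le {Ω ι : Type*} [Preorder ι] [LocallyFiniteOrderBot ι]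
    {m : MeasurableSpace Ω} {f : ι → Set Ω} {k : ι} (hf : ∀ j ≤ k, MeasurableSet[m] (f j)) :
    MeasurableSet[m] (disjointed f k) := by
  rw [disjointed_apply, sup_set_eq_biUnion]
  exact (hf k le_rfl).diff (measurableSet_biUnion _ fun j hj => hf j (mem_Iio.1 hj).le)

namespace ProbabilityTheory

namespace HasSubgaussianMGF

variable {Ω : Type*} {mΩ : MeasurableSpace Ω} {μ : Measure Ω} {X : Ω → ℝ} {c : ℝ≥0}

lemma mono (h : HasSubgaussianMGF X c μ) {c' : ℝ≥0} (hc : c ≤ c') :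
    HasSubgaussianMGF X c' μ where
  integrable_exp_mul := h.integrable_exp_mul
  mgf_le t := (h.mgf_le t).trans <| by gcongr

lemma measureReal_abs_ge_le [IsFiniteMeasure μ] (h : HasSubgaussianMGF X c μ) {ε : ℝ}
    (hε : 0 ≤ ε) : μ.real {ω | ε ≤ |X ω|} ≤ 2 * exp (-ε ^ 2 / (2 * c)) := by
  have hsplit : {ω | ε ≤ |X ω|} = {ω | ε ≤ X ω} ∪ {ω | ε ≤ (-X) ω} := by
    ext ω; simp [le_abs', le_neg, or_comm]
  calc μ.real {ω | ε ≤ |X ω|} ≤ μ.real {ω | ε ≤ X ω} + μ.real {ω | ε ≤ (-X) ω} :=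
        hsplit ▸ measureReal_union_le _ _
    _ ≤ exp (-ε ^ 2 / (2 * c)) + exp (-ε ^ 2 / (2 * c)) :=
        add_le_add (h.measure_ge_le hε) (h.neg.measure_ge_le hε)
    _ = 2 * exp (-ε ^ 2 / (2 * c)) := by ring

end HasSubgaussianMGF

variable {Ω ι : Type*} {mΩ : MeasurableSpace Ω} {μ : Measure Ω} {X : ι → Ω → ℝ}

theorem measure_abs_sum_gt_le_of_mem_Icc (hind : iIndepFun X μ) {s : Finset ι}
    (hmeas : ∀ i ∈ s, AEMeasurable (X i) μ) {a b : ℝ}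
    (hbound : ∀ i ∈ s, ∀ᵐ ω ∂μ, X i ω ∈ Set.Icc a b) (hmean : ∀ i ∈ s, μ[X i] = 0)
    {N : ℕ} (hN : #s ≤ N) {ε : ℝ} (hε : 0 ≤ ε) :
    μ {ω | ε < |∑ i ∈ s, X i ω|} ≤ ENNReal.ofReal (2 * exp (-2 * ε ^ 2 / (N * (b - a) ^ 2))) := by
  have := hind.isProbabilityMeasure
  have hsum : HasSubgaussianMGF (fun ω => ∑ i ∈ s, X i ω) (N * (‖b - a‖₊ / 2) ^ 2) μ :=
    (HasSubgaussianMGF.sum_of_iIndepFun hind fun i hi =>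
      hasSubgaussianMGF_of_mem_Icc_of_integral_eq_zero (hmeas i hi) (hbound i hi)
        (hmean i hi)).mono (by rw [sum_const, nsmul_eq_mul]; gcongr)
  rw [← ofReal_measureReal]
  refine ENNReal.ofReal_le_ofReal ((measureReal_mono fun ω (hω : ε < _) => hω.le).trans ?_)
  refine (hsum.measureReal_abs_ge_le hε).trans_eq ?_
  push_cast
  rw [Real.norm_eq_abs, div_pow, sq_abs]
  generalize (b - a) ^ 2 = d
  congr 2
  ring

lemma one_sub_le_measure_of_measure_compl_le [IsProbabilityMeasure μ] {s : Set Ω} {δ : ℝ≥0∞}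
    (h : μ sᶜ ≤ δ) : 1 - δ ≤ μ s := by
  rw [tsub_le_iff_right, ← measure_univ (μ := μ), ← Set.union_compl_self s]
  exact (measure_union_le _ _).trans (add_le_add_right h _)

lemma measurable_sum_iSup_comap {S : Set ι} {s : Finset ι} (hs : ∀ i ∈ s, i ∈ S) :
    Measurable[⨆ j ∈ S, MeasurableSpace.comap (X j) inferInstance] (fun ω => ∑ i ∈ s, X i ω) :=
  Finset.measurable_sum (m := ⨆ j ∈ S, MeasurableSpace.comap (X j) inferInstance) s
    fun i hi => Measurable.of_comap_le <|
      le_iSup₂ (f := fun j (_ : j ∈ S) => MeasurableSpace.comap (X j) inferInstance) i (hs i hi)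

lemma indepSet_of_measurableSet_iSup_Iic_Ioi [Preorder ι] (hmeas : ∀ i, Measurable (X i))
    (hind : iIndepFun X μ) {k : ι} {A B : Set Ω}
    (hA : MeasurableSet[⨆ i ∈ Set.Iic k, MeasurableSpace.comap (X i) inferInstance] A)
    (hB : MeasurableSet[⨆ i ∈ Set.Ioi k, MeasurableSpace.comap (X i) inferInstance] B) :
    IndepSet A B μ :=
  (indep_iSup_of_disjoint (fun i => (hmeas i).comap_le) hind.iIndep
    (Set.Iic_disjoint_Ioi le_rfl)).indepSet_of_measurableSet hA hB

variable [LinearOrder ι] [LocallyFiniteOrder ι] [LocallyFiniteOrderBot ι]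

theorem ottaviani_maximal_ineq (hmeas : ∀ i, Measurable (X i)) (hind : iIndepFun X μ) (n : ι)
    {r t : ℝ} {c : ℝ≥0∞} (hc : ∀ k ≤ n, c ≤ μ {ω | |∑ i ∈ Ioc k n, X i ω| ≤ t}) :
    c * μ {ω | ∃ k ≤ n, r + t < |∑ i ∈ Iic k, X i ω|} ≤ μ {ω | r < |∑ i ∈ Iic n, X i ω|} := by
  let exceeds k := {ω | r + t < |∑ i ∈ Iic k, X i ω|}
  let tailLe k := {ω | |∑ i ∈ Ioc k n, X i ω| ≤ t}
  let totalGt := {ω | r < |∑ i ∈ Iic n, X i ω|}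
  -- `disjointed exceeds k` is the event that `k` is the first index with `|S_k| > r + t`.
  have hfirst_meas k :
      MeasurableSet[⨆ i ∈ Set.Iic k, MeasurableSpace.comap (X i) inferInstance]
        (disjointed exceeds k) :=
    measurableSet_disjointed_of_le fun j hj => (measurable_abs.comp
      (measurable_sum_iSup_comap fun i hi => (mem_Iic.1 hi).trans hj)) measurableSet_Ioi
  have hfirst_meas' k : MeasurableSet (disjointed exceeds k) :=
    iSup₂_le (fun i _ => (hmeas i).comap_le) _ (hfirst_meas k)
  have hindep k : IndepSet (disjointed exceeds k) (tailLe k) μ :=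
    indepSet_of_measurableSet_iSup_Iic_Ioi hmeas hind (hfirst_meas k)
      ((measurable_abs.comp (measurable_sum_iSup_comap fun i hi => (mem_Ioc.1 hi).1))
        measurableSet_Iic)
  have hfirst_tail k (hk : k ≤ n) : disjointed exceeds k ∩ tailLe k ⊆ totalGt := by
    rintro ω ⟨hω, htail⟩
    have hsplit : ∑ i ∈ Iic n, X i ω = ∑ i ∈ Iic k, X i ω + ∑ i ∈ Ioc k n, X i ω := by
      rw [← sum_union (Iic_disjoint_Ioc le_rfl), Iic_union_Ioc_eq_Iic hk]
    show r < |_|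
    rw [hsplit]
    exact lt_abs_add_of_add_lt_abs (disjointed_subset exceeds k hω) htail
  have htotal : MeasurableSet totalGt :=
    (measurable_abs.comp (measurable_sum _ fun i _ => hmeas i)) measurableSet_Ioi
  have hunion :
      {ω | ∃ k ≤ n, r + t < |∑ i ∈ Iic k, X i ω|} = ⋃ k ∈ Iic n, disjointed exceeds k := by
    rw [biUnion_Iic_disjointed, partialSups_eq_biSup]
    ext ω; simp [exceeds]
  calc c * μ {ω | ∃ k ≤ n, r + t < |∑ i ∈ Iic k, X i ω|}
      = ∑ k ∈ Iic n, c * μ (disjointed exceeds k) := by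
        rw [hunion, measure_biUnion_finset (fun j _ k _ hjk => disjoint_disjointed exceeds hjk)
          fun k _ => hfirst_meas' k, mul_sum]
    _ ≤ ∑ k ∈ Iic n, μ (disjointed exceeds k ∩ totalGt) := by
        refine sum_le_sum fun k hk => ?_
        calc c * μ (disjointed exceeds k) ≤ μ (disjointed exceeds k) * μ (tailLe k) := by
              rw [mul_comm]; gcongr; exact hc k (mem_Iic.1 hk)
          _ = μ (disjointed exceeds k ∩ tailLe k) := (hindep k).measure_inter_eq_mul.symm
          _ ≤ μ (disjointed exceeds k ∩ totalGt) := measure_mono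
              (Set.subset_inter Set.inter_subset_left (hfirst_tail k (mem_Iic.1 hk)))
    _ = μ (⋃ k ∈ Iic n, disjointed exceeds k ∩ totalGt) :=
        (measure_biUnion_finset (fun j _ k _ hjk => (disjoint_disjointed exceeds hjk).mono
          Set.inter_subset_left Set.inter_subset_left)
          fun k _ => (hfirst_meas' k).inter htotal).symm
    _ ≤ μ totalGt := measure_mono (Set.iUnion₂_subset fun _ _ => Set.inter_subset_right)

theorem measure_exists_abs_sum_Iic_gt_two_mul_le (hmeas : ∀ i, Measurable (X i))
    (hind : iIndepFun X μ) (n : ι) {a b : ℝ} (hbound : ∀ i ≤ n, ∀ᵐ ω ∂μ, X i ω ∈ Set.Icc a b)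
    (hmean : ∀ i ≤ n, μ[X i] = 0) {N : ℕ} (hN : #(Iic n) ≤ N) {l : ℝ} (hl : 0 ≤ l)
    (hsmall : exp (-2 * l ^ 2 / (N * (b - a) ^ 2)) ≤ 1 / 4) :
    μ {ω | ∃ k ≤ n, 2 * l < |∑ i ∈ Iic k, X i ω|}
      ≤ ENNReal.ofReal (4 * exp (-2 * l ^ 2 / (N * (b - a) ^ 2))) := by
  set E := exp (-2 * l ^ 2 / (N * (b - a) ^ 2))
  have htail {s : Finset ι} (hs : s ⊆ Iic n) :
      μ {ω | l < |∑ i ∈ s, X i ω|} ≤ ENNReal.ofReal (2 * E) :=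
    measure_abs_sum_gt_le_of_mem_Icc hind (fun i _ => (hmeas i).aemeasurable)
      (fun i hi => hbound i (mem_Iic.1 (hs hi))) (fun i hi => hmean i (mem_Iic.1 (hs hi)))
      ((card_le_card hs).trans hN) hl
  have hhalf k (_ : k ≤ n) : 2⁻¹ ≤ μ {ω | |∑ i ∈ Ioc k n, X i ω| ≤ l} := by
    have := hind.isProbabilityMeasure
    rw [← ENNReal.one_sub_inv_two]
    refine one_sub_le_measure_of_measure_compl_le ?_
    simpa only [Set.compl_ofPred, not_le] using (htail Ioc_subset_Iic_self).trans
      (ENNReal.ofReal_le_of_le_toReal (by norm_num; linarith))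
  calc μ {ω | ∃ k ≤ n, 2 * l < |∑ i ∈ Iic k, X i ω|}
      = 2 * (2⁻¹ * μ {ω | ∃ k ≤ n, l + l < |∑ i ∈ Iic k, X i ω|}) := by
        rw [← mul_assoc, ENNReal.mul_inv_cancel two_ne_zero ENNReal.ofNat_ne_top, one_mul,
          two_mul]
    _ ≤ 2 * μ {ω | l < |∑ i ∈ Iic n, X i ω|} := by
        gcongr
        exact ottaviani_maximal_ineq hmeas hind n hhalf
    _ ≤ 2 * ENNReal.ofReal (2 * E) := by gcongr; exact htail subset_rfl
    _ = ENNReal.ofReal (4 * E) := by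
        rw [← ENNReal.ofReal_ofNat 2, ← ENNReal.ofReal_mul zero_le_two, ← mul_assoc]
        norm_num

end ProbabilityTheory

theorem stmt8_general {Θ : Type*} [MeasurableSpace Θ] (Pr : Measure Θ) [IsProbabilityMeasure Pr]
    (m : ℕ) (hm : 1 ≤ m) (u : ℕ → Θ → ℝ) (hmeas : ∀ i, Measurable (u i))
    (hInd : iIndepFun
      (fun k : {k : ℕ // 1 ≤ k ∧ k ≤ m} => u k.1) Pr)
    (hmean : ∀ i ∈ Finset.Icc 1 m, (∫ θ, u i θ ∂Pr) = 0)
    (L : ℝ) (a : ℝ)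
    (hbound : ∀ i ∈ Finset.Icc 1 m, ∀ᵐ θ ∂Pr, u i θ ∈ Set.Icc a (a + L))
    (S : ℕ → Θ → ℝ) (hS : ∀ k θ, S k θ = ∑ i ∈ Finset.Icc 1 k, u i θ) :
    ∀ l : ℝ, 0 < l → Real.exp (-2 * l ^ 2 / (m * L ^ 2)) ≤ 1 / 4 →
      Pr {θ | ∃ k ∈ Finset.Icc 1 m, 2 * l < |S k θ|}
        ≤ ENNReal.ofReal (4 * Real.exp (-2 * l ^ 2 / (m * L ^ 2))) := by
  intro l hl hsmall
  let n : {k : ℕ // 1 ≤ k ∧ k ≤ m} := ⟨m, hm, le_rfl⟩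
  have hS' (k : {k : ℕ // 1 ≤ k ∧ k ≤ m}) θ : S k θ = ∑ i ∈ Iic k, u i θ := by
    rw [hS, ← map_subtype_Iic_eq_Icc, sum_map]
    rfl
  have hevent : {θ | ∃ k ∈ Icc 1 m, 2 * l < |S k θ|}
      = {θ | ∃ k ≤ n, 2 * l < |∑ i ∈ Iic k, u i θ|} := by
    ext θ
    simp only [Set.mem_ofPred_eq, ← hS']
    exact ⟨fun ⟨k, hk, h⟩ => ⟨⟨k, mem_Icc.1 hk⟩, (mem_Icc.1 hk).2, h⟩,
      fun ⟨k, _, h⟩ => ⟨k, mem_Icc.2 k.2, h⟩⟩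
  have hcard : #(Iic n) = m := by
    rw [← card_map, map_subtype_Iic_eq_Icc, Nat.card_Icc, Nat.add_sub_cancel]
  have key := measure_exists_abs_sum_Iic_gt_two_mul_le (fun i => hmeas i.1) hInd n
    (fun i _ => hbound i (mem_Icc.2 i.2)) (fun i _ => hmean i (mem_Icc.2 i.2)) hcard.le hl.le
    (by rwa [add_sub_cancel_left])
  rw [add_sub_cancel_left] at key
  rwa [hevent]

/-- Maximal inequality for i.i.d. mean-zero random variables `u₁, …, u_m` taking values
a.s. in an interval of length `L`, with partial sums `S_k = Σ_{i=1}^k u_i`: if `λ > 0`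
satisfies `exp(-2λ²/(m·L²)) ≤ 1/4`, then
`P(max_{k ≤ m} |S_k| > 2λ) ≤ 4·exp(-2λ²/(m·L²))`. -/
theorem stmt8 {Θ : Type*} [MeasurableSpace Θ] (Pr : Measure Θ) [IsProbabilityMeasure Pr]
    (m : ℕ) (hm : 1 ≤ m) (u : ℕ → Θ → ℝ) (hmeas : ∀ i, Measurable (u i))
    (hInd : iIndepFun
      (fun k : {k : ℕ // 1 ≤ k ∧ k ≤ m} => u k.1) Pr)
    (hid : ∀ i ∈ Finset.Icc 1 m, ∀ j ∈ Finset.Icc 1 m, IdentDistrib (u i) (u j) Pr Pr)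
    (hmean : ∀ i ∈ Finset.Icc 1 m, (∫ θ, u i θ ∂Pr) = 0)
    (L : ℝ) (hL : 0 < L) (a : ℝ)
    (hbound : ∀ i ∈ Finset.Icc 1 m, ∀ᵐ θ ∂Pr, u i θ ∈ Set.Icc a (a + L))
    (S : ℕ → Θ → ℝ) (hS : ∀ k θ, S k θ = ∑ i ∈ Finset.Icc 1 k, u i θ) :
    ∀ l : ℝ, 0 < l → Real.exp (-2 * l ^ 2 / (m * L ^ 2)) ≤ 1 / 4 →
      Pr {θ | ∃ k ∈ Finset.Icc 1 m, 2 * l < |S k θ|}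
        ≤ ENNReal.ofReal (4 * Real.exp (-2 * l ^ 2 / (m * L ^ 2))) :=
  stmt8_general Pr m hm u hmeas hInd hmean L a hbound S hS
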